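/- Let U be an n×n complex unitary matrix such that the kernel of I − U is one-dimensional; let a be a unit vector with U a = a, and let (a = a_1, a_2, …, a_n) be an orthonormal basis of eigenvectors of U with eigenvalues (1 = λ_1, λ_2, …, λ_n), where λ_j ≠ 1 for all j ≥ 2. Then adj(I − U) = ( Π_{j=2}^n (1 − λ_j) ) · a a^*, and consequently trace(adj(I − U)) = Π_{j=2}^n (1 − λ_j) ≠ 0. -/

import Mathlib

/-!
Diagonalise in the orthonormal eigenbasis: `1 - U = B D Bᴴ` with `B` unitary and
`D = diag (1 - λ_j)`. Since `adj (X Y) = adj Y adj X` and `adj B = det B • Bᴴ`, this gives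
`adj (1 - U) = B (adj D) Bᴴ`. The entry `i` of the diagonal matrix `adj D` is `∏_{j ≠ i} (1 - λ_j)`,
which vanishes for `i ≠ j₀` because `1 - λ_{j₀} = 0`; so only the rank-one projection onto
`b j₀ = a` survives, and its trace is `⟨a, a⟩ = 1`.
-/

open Matrix

theorem Finset.prod_univ_erase_eq_piSingle_of_eq_zero {ι M : Type*} [Fintype ι] [DecidableEq ι]
    [CommMonoidWithZero M] {f : ι → M} {j₀ : ι} (h : f j₀ = 0) :
    (fun i => ∏ j ∈ univ.erase i, f j) = Pi.single j₀ (∏ j ∈ univ.erase j₀, f j) := by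
  funext i
  rcases eq_or_ne i j₀ with rfl | hi
  · simp
  · rw [Pi.single_eq_of_ne hi]
    exact prod_eq_zero (mem_erase.mpr ⟨Ne.symm hi, mem_univ _⟩) h

namespace Matrix

variable {n R : Type*} [Fintype n] [DecidableEq n]

section Adjugate

variable [CommRing R]

theorem adjugate_eq_det_smul_of_mul_eq_one {B C : Matrix n n R} (h : B * C = 1) :
    adjugate B = B.det • C := by
  calc adjugate B = adjugate B * B * C := by rw [Matrix.mul_assoc, h, Matrix.mul_one]
    _ = B.det • C := by rw [adjugate_mul, smul_mul, Matrix.one_mul]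

theorem adjugate_mul_mul_of_mul_eq_one {B C : Matrix n n R} (h : C * B = 1) (D : Matrix n n R) :
    adjugate (B * D * C) = B * adjugate D * C := by
  have hdet : B.det * C.det = 1 := by rw [mul_comm, ← det_mul, h, det_one]
  rw [adjugate_mul_distrib, adjugate_mul_distrib, adjugate_eq_det_smul_of_mul_eq_one h,
    adjugate_eq_det_smul_of_mul_eq_one (mul_eq_one_comm.mp h)]
  simp only [Matrix.smul_mul, Matrix.mul_smul, smul_smul, Matrix.mul_assoc, hdet, one_smul]

end Adjugate

section Eigenbasis

variable [CommRing R] [StarRing R]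

theorem conjTranspose_mul_self_eq_one_of_orthonormal {b : n → n → R}
    (h : ∀ i j, star (b i) ⬝ᵥ b j = if i = j then 1 else 0) :
    (of fun i j => b j i)ᴴ * of (fun i j => b j i) = 1 := by
  ext i j
  simpa [mul_apply, dotProduct, one_apply] using h i j

theorem eq_mul_diagonal_mul_conjTranspose_of_eigenvectors {b : n → n → R} {M : Matrix n n R}
    {d : n → R} (hb : (of fun i j => b j i)ᴴ * of (fun i j => b j i) = 1)
    (h : ∀ j, M *ᵥ b j = d j • b j) :
    M = of (fun i j => b j i) * diagonal d * (of fun i j => b j i)ᴴ := by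
  set B : Matrix n n R := of fun i j => b j i
  have hMB : M * B = B * diagonal d := by
    ext i j
    rw [mul_diagonal]
    simpa [mul_comm, mulVec, dotProduct, mul_apply, B] using congrFun (h j) i
  rw [← hMB, Matrix.mul_assoc, mul_eq_one_comm.mp hb, Matrix.mul_one]

theorem mul_diagonal_single_mul_conjTranspose (B : Matrix n n R) (j : n) (c : R) :
    B * diagonal (Pi.single j c) * Bᴴ = c • vecMulVec (fun i => B i j) (star fun i => B i j) := by
  ext p q
  rw [mul_apply]
  simp [mul_diagonal, Pi.single_apply, vecMulVec_apply, mul_comm, mul_assoc]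

end Eigenbasis

end Matrix

theorem stmt2_general {n : ℕ} (U : Matrix (Fin n) (Fin n) ℂ)
    (a : Fin n → ℂ) (ha : dotProduct (star a) a = 1)
    (b : Fin n → (Fin n → ℂ)) (lam : Fin n → ℂ) (j₀ : Fin n)
    (horth : ∀ i j, dotProduct (star (b i)) (b j) = if i = j then 1 else 0)
    (heig : ∀ j, U.mulVec (b j) = lam j • b j)
    (hb : b j₀ = a) (hl : lam j₀ = 1)
    (hl' : ∀ j, j ≠ j₀ → lam j ≠ 1) :
    (1 - U).adjugate =
        (∏ j ∈ Finset.univ.erase j₀, (1 - lam j)) • Matrix.vecMulVec a (star a) ∧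
      (1 - U).adjugate.trace = ∏ j ∈ Finset.univ.erase j₀, (1 - lam j) ∧
      (∏ j ∈ Finset.univ.erase j₀, (1 - lam j)) ≠ 0 := by
  set B : Matrix (Fin n) (Fin n) ℂ := of fun i j => b j i
  have hB : Bᴴ * B = 1 := conjTranspose_mul_self_eq_one_of_orthonormal horth
  have hdiag : 1 - U = B * diagonal (fun j => 1 - lam j) * Bᴴ :=
    eq_mul_diagonal_mul_conjTranspose_of_eigenvectors hB fun j => by
      rw [sub_mulVec, one_mulVec, heig, sub_smul, one_smul]
  have hadj : (1 - U).adjugate =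
      (∏ j ∈ Finset.univ.erase j₀, (1 - lam j)) • vecMulVec a (star a) := by
    rw [hdiag, adjugate_mul_mul_of_mul_eq_one hB, adjugate_diagonal,
      Finset.prod_univ_erase_eq_piSingle_of_eq_zero (j₀ := j₀) (by simp [hl]),
      mul_diagonal_single_mul_conjTranspose]
    simp [B, hb]
  have hne : (∏ j ∈ Finset.univ.erase j₀, (1 - lam j)) ≠ 0 :=
    Finset.prod_ne_zero_iff.mpr fun j hj =>
      sub_ne_zero.mpr (hl' j (Finset.ne_of_mem_erase hj)).symm
  refine ⟨hadj, ?_, hne⟩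
  rw [hadj, trace_smul, trace_vecMulVec, dotProduct_comm, ha, smul_eq_mul, mul_one]

/-- If `U` is unitary with one-dimensional kernel of `1 - U`, `a` a unit eigenvector with
eigenvalue `1`, and `b` an orthonormal eigenbasis with eigenvalues `lam`, where `b j₀ = a`,
`lam j₀ = 1`, and `lam j ≠ 1` for `j ≠ j₀`, then
`adj(1 - U) = (∏_{j ≠ j₀} (1 - lam j)) • a a^*` and
`trace (adj (1 - U)) = ∏_{j ≠ j₀} (1 - lam j) ≠ 0`. -/
theorem stmt2 {n : ℕ} (U : Matrix (Fin n) (Fin n) ℂ)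
    (hU : U ∈ Matrix.unitaryGroup (Fin n) ℂ)
    (hker : Module.finrank ℂ (LinearMap.ker (1 - U).mulVecLin) = 1)
    (a : Fin n → ℂ) (ha : dotProduct (star a) a = 1) (haU : U.mulVec a = a)
    (b : Fin n → (Fin n → ℂ)) (lam : Fin n → ℂ) (j₀ : Fin n)
    (horth : ∀ i j, dotProduct (star (b i)) (b j) = if i = j then 1 else 0)
    (heig : ∀ j, U.mulVec (b j) = lam j • b j)
    (hb : b j₀ = a) (hl : lam j₀ = 1)
    (hl' : ∀ j, j ≠ j₀ → lam j ≠ 1) :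
    (1 - U).adjugate =
        (∏ j ∈ Finset.univ.erase j₀, (1 - lam j)) • Matrix.vecMulVec a (star a) ∧
      (1 - U).adjugate.trace = ∏ j ∈ Finset.univ.erase j₀, (1 - lam j) ∧
      (∏ j ∈ Finset.univ.erase j₀, (1 - lam j)) ≠ 0 :=
  stmt2_general U a ha b lam j₀ horth heig hb hl hl'
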